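/- arXiv:1608.07939 — 7 statements merged into one kernel-verified Lean document; each statement's English description precedes it below -/
import Mathlib

section
/- Let A and B be complex n×n matrices. If there exists a unitary n×n matrix P such that PA and PB are both positive semidefinite, then E(A + B) = E(A) + E(B), where E denotes the sum of singular values. -/
open scoped ComplexOrder

/-- The energy of a complex square matrix `M` is the sum of its singular values,
i.e. the trace of `|M| = (Mᴴ M)^{1/2}`. -/
noncomputable def matrixEnergy {n : ℕ} (M : Matrix (Fin n) (Fin n) ℂ) : ℝ :=
  (((Matrix.posSemidef_conjTranspose_mul_self M).1.eigenvectorUnitary.1 *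
      Matrix.diagonal (((↑) : ℝ → ℂ) ∘ (√·) ∘ (Matrix.posSemidef_conjTranspose_mul_self M).1.eigenvalues) *
      (star (Matrix.posSemidef_conjTranspose_mul_self M).1.eigenvectorUnitary :
        Matrix (Fin n) (Fin n) ℂ)).trace).re

/-!
If `U` is unitary and `U * a ≥ 0`, then `U * a` is a positive square root of
`star (U * a) * (U * a) = star a * a`, so `|a| = U * a`. Hence all three of `|A|`, `|B|`,
`|A + B|` are `P` times their argument, and the energy `re (trace |·|)` is additive on them.
-/

namespace CFC

variable {A : Type*} [Ring A] [StarRing A] [TopologicalSpace A]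
  [Module ℝ A] [SMulCommClass ℝ A A] [IsScalarTower ℝ A A]
  [NonUnitalContinuousFunctionalCalculus ℝ A IsSelfAdjoint]
  [PartialOrder A] [StarOrderedRing A] [NonnegSpectrumClass ℝ A]

lemma abs_unitary_mul {u : A} (hu : u ∈ unitary A) (a : A) : abs (u * a) = abs a := by
  rw [abs, abs, star_mul, mul_assoc, ← mul_assoc (star u), Unitary.star_mul_self_of_mem hu,
    one_mul]

variable [IsTopologicalRing A] [T2Space A]

lemma abs_eq_unitary_mul_of_nonneg {u a : A} (hu : u ∈ unitary A) (hua : 0 ≤ u * a) :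
    abs a = u * a := by
  rw [← abs_unitary_mul hu, abs_of_nonneg _ hua]

end CFC

open scoped MatrixOrder

lemma matrixEnergy_eq_re_trace_abs {n : ℕ} (M : Matrix (Fin n) (Fin n) ℂ) :
    matrixEnergy M = (CFC.abs M).trace.re := by
  have hM := Matrix.posSemidef_conjTranspose_mul_self M
  rw [matrixEnergy, CFC.abs, CFC.sqrt_eq_real_sqrt (star M * M) hM.nonneg, cfcₙ_eq_cfc,
    Matrix.star_eq_conjTranspose M, hM.1.cfc_eq]
  simp [Matrix.IsHermitian.cfc, Unitary.conjStarAlgAut_apply]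

/-- **Ky Fan's theorem** (equality part, sufficiency): if there is a unitary matrix `P`
such that both `P * A` and `P * B` are positive semidefinite, then
`E(A + B) = E(A) + E(B)`. -/
theorem matrixEnergy_add_eq_of_unitary {n : ℕ} (A B : Matrix (Fin n) (Fin n) ℂ)
    (h : ∃ P ∈ Matrix.unitaryGroup (Fin n) ℂ,
      (P * A).PosSemidef ∧ (P * B).PosSemidef) :
    matrixEnergy (A + B) = matrixEnergy A + matrixEnergy B := by
  obtain ⟨P, hP, hA, hB⟩ := h
  have hAB : (P * (A + B)).PosSemidef := by rw [Matrix.mul_add]; exact hA.add hB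
  rw [matrixEnergy_eq_re_trace_abs, matrixEnergy_eq_re_trace_abs, matrixEnergy_eq_re_trace_abs,
    CFC.abs_eq_unitary_mul_of_nonneg hP hAB.nonneg, CFC.abs_eq_unitary_mul_of_nonneg hP hA.nonneg,
    CFC.abs_eq_unitary_mul_of_nonneg hP hB.nonneg, Matrix.mul_add, Matrix.trace_add, Complex.add_re]
end

section
/- Let G be a connected simple graph on n vertices with a vertex weight ω. Then LE_ω(G) ≤ n·MD_ω(G) + E(G), i.e., the weighted Laplacian energy of G is at most n times the mean deviation of the weights plus the (adjacency) energy of G. -/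
/-!
Write `L = D_ω - A` with orthogonal eigenvector matrix `U`, and let
`S = U · diag(sign(μ_i - ω̄)) · Uᵀ`. Then `LE_ω(G) = tr((L - ω̄ I) S)`. In every orthonormal basis the
diagonal entries of `S` are convex combinations of signs, hence lie in `[-1, 1]`. Reading off
`tr((D_ω - ω̄ I) S)` in the standard basis bounds it by `Σ |ω_i - ω̄|`, and reading off `tr(A S)` in an
eigenbasis of `A` bounds it by `Σ |λ_i| = E(G)`.
-/

namespace Matrix

variable {ι : Type*} [Fintype ι] [DecidableEq ι]

theorem abs_star_mul_diagonal_mul_apply_le_one {W : Matrix ι ι ℝ} (hW : W ∈ unitaryGroup ι ℝ)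
    {s : ι → ℝ} (hs : ∀ j, |s j| ≤ 1) (i : ι) :
    |(star W * diagonal s * W) i i| ≤ 1 := by
  have hcol : ∑ k, W k i ^ 2 = 1 := by
    simpa [mul_apply, sq] using congrFun (congrFun (mem_unitaryGroup_iff'.mp hW) i) i
  have hentry : (star W * diagonal s * W) i i = ∑ k, s k * W k i ^ 2 := by
    rw [mul_apply]
    simp only [mul_diagonal, star_apply, star_trivial]
    exact Finset.sum_congr rfl fun k _ => by ring
  calc |(star W * diagonal s * W) i i| ≤ ∑ k, |s k * W k i ^ 2| := by
        rw [hentry]; exact Finset.abs_sum_le_sum_abs _ _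
    _ ≤ ∑ k, W k i ^ 2 := Finset.sum_le_sum fun k _ => by
        rw [abs_mul, abs_sq]; exact mul_le_of_le_one_left (sq_nonneg _) (hs k)
    _ = 1 := hcol

theorem abs_conj_diagonal_conj_apply_le_one {V W : Matrix ι ι ℝ} (hV : V ∈ unitaryGroup ι ℝ)
    (hW : W ∈ unitaryGroup ι ℝ) {s : ι → ℝ} (hs : ∀ j, |s j| ≤ 1) (i : ι) :
    |(star V * (W * diagonal s * star W) * V) i i| ≤ 1 := by
  have hconj : star V * (W * diagonal s * star W) * V =
      star (star W * V) * diagonal s * (star W * V) := by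
    simp only [star_mul, star_star, Matrix.mul_assoc]
  rw [hconj]
  exact abs_star_mul_diagonal_mul_apply_le_one (mul_mem (Unitary.star_mem hW) hV) hs i

namespace IsHermitian

variable {M : Matrix ι ι ℝ} (hM : M.IsHermitian)

theorem trace_sub_smul_mul_eq_sum (c : ℝ) (S : Matrix ι ι ℝ) :
    ((M - c • 1) * S).trace = ∑ i, (hM.eigenvalues i - c) *
      (star (hM.eigenvectorUnitary : Matrix ι ι ℝ) * S * hM.eigenvectorUnitary) i i := by
  set U := (hM.eigenvectorUnitary : Matrix ι ι ℝ)
  have hdiag : star U * M * U = diagonal hM.eigenvalues := by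
    simpa [Unitary.conjStarAlgAut_star_apply] using hM.conjStarAlgAut_star_eigenvectorUnitary
  have hUU : U * star U = 1 := Unitary.mul_star_self_of_mem hM.eigenvectorUnitary.2
  have hUU' : star U * U = 1 := Unitary.star_mul_self_of_mem hM.eigenvectorUnitary.2
  have hconj : star U * (M - c • 1) * U = diagonal (fun i => hM.eigenvalues i - c) := by
    rw [Matrix.mul_sub, Matrix.sub_mul, hdiag, Matrix.mul_smul, Matrix.smul_mul, Matrix.mul_one,
      hUU', ← diagonal_one, ← diagonal_smul, diagonal_sub]
    simp
  calc ((M - c • 1) * S).trace = (star U * (M - c • 1) * U * (star U * S * U)).trace := by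
        rw [show star U * (M - c • 1) * U * (star U * S * U)
            = star U * ((M - c • 1) * (U * star U) * S) * U by simp only [Matrix.mul_assoc],
          trace_mul_cycle, hUU, Matrix.mul_one, Matrix.one_mul]
    _ = _ := by simp only [hconj, trace, diag, diagonal_mul]

theorem abs_trace_mul_conj_diagonal_le {W : Matrix ι ι ℝ} (hW : W ∈ unitaryGroup ι ℝ)
    {s : ι → ℝ} (hs : ∀ j, |s j| ≤ 1) :
    |(M * (W * diagonal s * star W)).trace| ≤ ∑ i, |hM.eigenvalues i| := by
  have htr := hM.trace_sub_smul_mul_eq_sum 0 (W * diagonal s * star W)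
  rw [zero_smul, sub_zero] at htr
  rw [htr]
  refine (Finset.abs_sum_le_sum_abs _ _).trans (Finset.sum_le_sum fun i _ => ?_)
  rw [sub_zero, abs_mul]
  exact mul_le_of_le_one_right (abs_nonneg _)
    (abs_conj_diagonal_conj_apply_le_one hM.eigenvectorUnitary.2 hW hs i)

theorem exists_trace_sub_smul_mul_conj_diagonal_eq (c : ℝ) :
    ∃ W ∈ unitaryGroup ι ℝ, ∃ s : ι → ℝ, (∀ j, |s j| ≤ 1) ∧
      ((M - c • 1) * (W * diagonal s * star W)).trace = ∑ i, |hM.eigenvalues i - c| := by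
  set U := (hM.eigenvectorUnitary : Matrix ι ι ℝ)
  set s : ι → ℝ := fun i => SignType.sign (hM.eigenvalues i - c)
  have hUU : star U * U = 1 := Unitary.star_mul_self_of_mem hM.eigenvectorUnitary.2
  have hconj : star U * (U * diagonal s * star U) * U = diagonal s := by
    simp only [← Matrix.mul_assoc, hUU, Matrix.one_mul]
    rw [Matrix.mul_assoc, hUU, Matrix.mul_one]
  refine ⟨U, hM.eigenvectorUnitary.2, s, fun j => ?_, ?_⟩
  · rcases lt_trichotomy (hM.eigenvalues j - c) 0 with h | h | h <;>
      simp [s, h, sign_neg, sign_pos]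
  · rw [hM.trace_sub_smul_mul_eq_sum, hconj]
    simp [s, self_mul_sign]

end IsHermitian

theorem sum_abs_eigenvalues_sub_le {d : ι → ℝ} {N : Matrix ι ι ℝ}
    (hM : (diagonal d - N).IsHermitian) (hN : N.IsHermitian) (c : ℝ) :
    ∑ i, |hM.eigenvalues i - c| ≤ ∑ i, |d i - c| + ∑ i, |hN.eigenvalues i| := by
  obtain ⟨W, hW, s, hs, htr⟩ := hM.exists_trace_sub_smul_mul_conj_diagonal_eq c
  set S := W * diagonal s * star W
  have hsplit : diagonal d - N - c • 1 = diagonal (fun i => d i - c) - N := by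
    ext i j; by_cases h : i = j <;> simp [h]; ring
  have hS : ∀ i, |S i i| ≤ 1 := fun i => by
    simpa using abs_conj_diagonal_conj_apply_le_one (one_mem _) hW hs i
  have hdiag : (diagonal (fun i => d i - c) * S).trace ≤ ∑ i, |d i - c| := by
    simp only [trace, diag, diagonal_mul]
    exact Finset.sum_le_sum fun i _ => (le_abs_self _).trans <| by
      rw [abs_mul]; exact mul_le_of_le_one_right (abs_nonneg _) (hS i)
  have htrN := neg_le_of_abs_le (hN.abs_trace_mul_conj_diagonal_le hW hs)
  rw [← htr, hsplit, Matrix.sub_mul, trace_sub]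
  linarith

end Matrix

theorem weighted_laplacian_energy_le_general
    (n : ℕ) (hn : 0 < n) (G : SimpleGraph (Fin n)) [DecidableRel G.Adj]
    (ω : Fin n → ℝ)
    (hL : (Matrix.diagonal ω - G.adjMatrix ℝ).IsHermitian)
    (hA : (G.adjMatrix ℝ).IsHermitian) :
    ∑ i, |hL.eigenvalues i - (∑ j, ω j) / n| ≤
      (n : ℝ) * ((1 / (n : ℝ)) * ∑ i, |ω i - (∑ j, ω j) / n|) +
        ∑ i, |hA.eigenvalues i| := by
  rw [← mul_assoc, mul_one_div_cancel (Nat.cast_ne_zero.mpr hn.ne'), one_mul]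
  exact Matrix.sum_abs_eigenvalues_sub_le hL hA _

/-- For a connected graph `G` on `n` vertices with vertex weight `ω`,
`LE_ω(G) ≤ n · MD_ω(G) + E(G)`. -/
theorem weighted_laplacian_energy_le
    (n : ℕ) (hn : 0 < n) (G : SimpleGraph (Fin n)) [DecidableRel G.Adj]
    (hconn : G.Connected)
    (ω : Fin n → ℝ) (hω : ∀ i, 0 < ω i)
    (hL : (Matrix.diagonal ω - G.adjMatrix ℝ).IsHermitian)
    (hA : (G.adjMatrix ℝ).IsHermitian) :
    ∑ i, |hL.eigenvalues i - (∑ j, ω j) / n| ≤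
      (n : ℝ) * ((1 / (n : ℝ)) * ∑ i, |ω i - (∑ j, ω j) / n|) +
        ∑ i, |hA.eigenvalues i| :=
  weighted_laplacian_energy_le_general n hn G ω hL hA
end

section
/- Let G be a connected simple graph on n vertices with a vertex weight ω. Then equality LE_ω(G) = n·MD_ω(G) + E(G) holds if and only if G is ω-regular, i.e., ω is constant on the vertices of G. -/
/-!
Write `L = diag ω - A`, `c` for the mean weight and `s k` for the sign of `μ k - c`. Expanding each
eigenvector `v k` of `L` in the standard basis `e` and in an eigenbasis `w` of `A` gives
`∑ |μ k - c| = ∑ k, s k * ∑ j, (ω j - c) ⟪e j, v k⟫² - ∑ k, s k * ∑ l, λ l ⟪w l, v k⟫²`.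
The squared overlaps of two orthonormal bases form a doubly stochastic matrix, so the two sums are
at most `∑ |ω j - c|` and `∑ |λ l|`. If equality holds and `c < ω j`, tightness of the first bound
gives `⟪e j, v k⟫ = 0` whenever `s k ≠ 1`, and tightness of the second makes every `v k` with
`s k = 1` orthogonal to the eigenspace of the (positive) top eigenvalue of `A`. That eigenspace
contains a Perron vector, positive everywhere since `G` is connected, and expanding it in the basis
`v` shows that its `j`-th coordinate vanishes. Conversely, for constant `ω` the matrix `L - c` is
`-A`, whose eigenvalues are the `μ k - c` as well as the `-λ l`.
-/

open scoped RealInnerProductSpace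
open Finset Matrix

section SignBounds

variable {α : Type*} [Ring α] [LinearOrder α] [IsStrictOrderedRing α]

lemma abs_sign_le_one (x : α) : |(SignType.sign x : α)| ≤ 1 := by
  rcases SignType.sign x with _ | _ | _ <;> simp

lemma mul_le_abs_of_abs_le_one (a : α) {r : α} (hr : |r| ≤ 1) : a * r ≤ |a| :=
  (le_abs_self _).trans (by rw [abs_mul]; exact mul_le_of_le_one_right (abs_nonneg a) hr)

end SignBounds

namespace OrthonormalBasis

variable {ι κ E : Type*} [Fintype ι] [Fintype κ] [NormedAddCommGroup E] [InnerProductSpace ℝ E]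

lemma inner_eq_zero_of_forall_or (b : OrthonormalBasis ι ℝ E) {x y : E}
    (h : ∀ i, ⟪x, b i⟫ = 0 ∨ ⟪b i, y⟫ = 0) : ⟪x, y⟫ = 0 := by
  rw [← b.sum_inner_mul_inner]
  exact sum_eq_zero fun i _ => by rcases h i with h | h <;> simp [h]

lemma abs_sum_mul_inner_sq_le (v : OrthonormalBasis κ ℝ E) {s : κ → ℝ}
    (hs : ∀ k, |s k| ≤ 1) (x : E) : |∑ k, s k * ⟪x, v k⟫ ^ 2| ≤ ‖x‖ ^ 2 := by
  calc |∑ k, s k * ⟪x, v k⟫ ^ 2| ≤ ∑ k, |s k * ⟪x, v k⟫ ^ 2| := abs_sum_le_sum_abs _ _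
    _ ≤ ∑ k, ⟪x, v k⟫ ^ 2 := by
      gcongr with k
      rw [abs_mul, abs_sq]
      exact mul_le_of_le_one_left (sq_nonneg _) (hs k)
    _ = ‖x‖ ^ 2 := v.sum_sq_inner_left x

lemma inner_eq_zero_of_sum_mul_inner_sq_eq (v : OrthonormalBasis κ ℝ E) {s : κ → ℝ}
    (hs : ∀ k, s k ≤ 1) {x : E} (h : ∑ k, s k * ⟪x, v k⟫ ^ 2 = ‖x‖ ^ 2) {k : κ}
    (hk : s k ≠ 1) : ⟪x, v k⟫ = 0 := by
  have hslack : ∑ k, (1 - s k) * ⟪x, v k⟫ ^ 2 = 0 := by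
    simp only [sub_mul, one_mul, sum_sub_distrib, v.sum_sq_inner_left, h, sub_self]
  have := (sum_eq_zero_iff_of_nonneg fun k _ =>
    mul_nonneg (sub_nonneg.2 (hs k)) (sq_nonneg ⟪x, v k⟫)).1 hslack k (mem_univ k)
  simpa [sub_eq_zero, Ne.symm hk] using this

lemma sum_mul_sum_inner_sq_comm (b : OrthonormalBasis ι ℝ E) (v : OrthonormalBasis κ ℝ E)
    (s : κ → ℝ) (η : ι → ℝ) :
    ∑ k, s k * ∑ i, η i * ⟪b i, v k⟫ ^ 2 = ∑ i, η i * ∑ k, s k * ⟪b i, v k⟫ ^ 2 := by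
  simp only [mul_sum]
  rw [sum_comm]
  exact sum_congr rfl fun _ _ => sum_congr rfl fun _ _ => by ring

lemma sum_mul_sum_inner_sq_le (b : OrthonormalBasis ι ℝ E) (v : OrthonormalBasis κ ℝ E)
    {s : κ → ℝ} (hs : ∀ k, |s k| ≤ 1) (η : ι → ℝ) :
    ∑ k, s k * ∑ i, η i * ⟪b i, v k⟫ ^ 2 ≤ ∑ i, |η i| := by
  rw [sum_mul_sum_inner_sq_comm]
  gcongr with i
  refine mul_le_abs_of_abs_le_one _ ?_
  simpa [b.norm_eq_one] using v.abs_sum_mul_inner_sq_le hs (b i)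

lemma inner_eq_zero_of_sum_abs_le (b : OrthonormalBasis ι ℝ E) (v : OrthonormalBasis κ ℝ E)
    {s : κ → ℝ} (hs : ∀ k, |s k| ≤ 1) {η : ι → ℝ}
    (h : ∑ i, |η i| ≤ ∑ k, s k * ∑ i, η i * ⟪b i, v k⟫ ^ 2) {i : ι} (hi : 0 < η i) {k : κ}
    (hk : s k ≠ 1) : ⟪b i, v k⟫ = 0 := by
  set R := fun i => ∑ k, s k * ⟪b i, v k⟫ ^ 2
  have hR : ∀ i, |R i| ≤ 1 := fun i => by
    simpa [b.norm_eq_one] using v.abs_sum_mul_inner_sq_le hs (b i)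
  have hslack : ∀ i ∈ univ, 0 ≤ |η i| - η i * R i := fun i _ =>
    sub_nonneg.2 (mul_le_abs_of_abs_le_one _ (hR i))
  have hzero : ∑ i, (|η i| - η i * R i) = 0 := by
    rw [sum_sub_distrib, ← sum_mul_sum_inner_sq_comm]
    linarith [sum_mul_sum_inner_sq_le b v hs η]
  have hRi : R i = 1 := by
    have := (sum_eq_zero_iff_of_nonneg hslack).1 hzero i (mem_univ i)
    rw [abs_of_pos hi, sub_eq_zero, eq_comm, mul_eq_left₀ hi.ne'] at this
    exact this
  refine v.inner_eq_zero_of_sum_mul_inner_sq_eq (fun k => le_of_abs_le (hs k)) ?_ hk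
  simpa [b.norm_eq_one] using hRi

end OrthonormalBasis

namespace LinearMap.IsSymmetric

variable {ι κ E : Type*} [Fintype ι] [Fintype κ] [NormedAddCommGroup E] [InnerProductSpace ℝ E]
  {T : E →ₗ[ℝ] E} {b : OrthonormalBasis ι ℝ E} {η : ι → ℝ}

lemma inner_apply_self_eq_sum (hT : T.IsSymmetric) (hb : ∀ i, T (b i) = η i • b i) (x : E) :
    ⟪x, T x⟫ = ∑ i, η i * ⟪b i, x⟫ ^ 2 := by
  rw [← b.sum_inner_mul_inner x (T x)]
  refine sum_congr rfl fun i _ => ?_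
  rw [← hT, hb, real_inner_smul_left, real_inner_comm x]
  ring

lemma inner_apply_self_le (hT : T.IsSymmetric) (hb : ∀ i, T (b i) = η i • b i) {ρ : ℝ}
    (hρ : ∀ i, η i ≤ ρ) (x : E) : ⟪x, T x⟫ ≤ ρ * ‖x‖ ^ 2 := by
  rw [hT.inner_apply_self_eq_sum hb, ← b.sum_sq_inner_right, mul_sum]
  gcongr with i
  exact hρ i

lemma inner_eq_zero_of_inner_apply_self_eq (hT : T.IsSymmetric) (hb : ∀ i, T (b i) = η i • b i)
    {ρ : ℝ} (hρ : ∀ i, η i ≤ ρ) {x : E} (hx : ⟪x, T x⟫ = ρ * ‖x‖ ^ 2) {i : ι} (hi : η i ≠ ρ) :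
    ⟪b i, x⟫ = 0 := by
  have hslack : ∑ j, (ρ - η j) * ⟪b j, x⟫ ^ 2 = 0 := by
    simp only [sub_mul, sum_sub_distrib, ← mul_sum, b.sum_sq_inner_right,
      ← hT.inner_apply_self_eq_sum hb, hx, sub_self]
  have := (sum_eq_zero_iff_of_nonneg fun j _ =>
    mul_nonneg (sub_nonneg.2 (hρ j)) (sq_nonneg ⟪b j, x⟫)).1 hslack i (mem_univ i)
  simpa [sub_eq_zero, Ne.symm hi] using this

lemma sum_abs_le_of_eigenbasis (hT : T.IsSymmetric) (hb : ∀ i, T (b i) = η i • b i)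
    {b' : OrthonormalBasis κ ℝ E} {η' : κ → ℝ} (hb' : ∀ k, T (b' k) = η' k • b' k) :
    ∑ k, |η' k| ≤ ∑ i, |η i| := by
  calc ∑ k, |η' k| = ∑ k, (SignType.sign (η' k) : ℝ) * ⟪b' k, T (b' k)⟫ := by
        refine sum_congr rfl fun k _ => ?_
        rw [hb', real_inner_smul_right, real_inner_self_eq_norm_sq, b'.norm_eq_one]
        simp
    _ ≤ ∑ i, |η i| := by
        simp only [hT.inner_apply_self_eq_sum hb]
        exact b.sum_mul_sum_inner_sq_le b' (fun k => abs_sign_le_one _) η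

end LinearMap.IsSymmetric

lemma LinearMap.apply_eq_smul_of_forall_inner_eq_zero {ι E : Type*} [Fintype ι]
    [NormedAddCommGroup E] [InnerProductSpace ℝ E] {T : E →ₗ[ℝ] E} {b : OrthonormalBasis ι ℝ E}
    {η : ι → ℝ} (hb : ∀ i, T (b i) = η i • b i) {ρ : ℝ} {x : E}
    (h : ∀ i, η i ≠ ρ → ⟪b i, x⟫ = 0) : T x = ρ • x := by
  conv_lhs => rw [← b.sum_repr' x]
  conv_rhs => rw [← b.sum_repr' x]
  rw [map_sum, smul_sum]
  refine sum_congr rfl fun i _ => ?_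
  rw [map_smul, hb]
  by_cases hi : η i = ρ
  · rw [hi, smul_comm]
  · simp [h i hi]

namespace Matrix

variable {V : Type*} [Fintype V]

lemma dotProduct_mulVec_le_abs {A : Matrix V V ℝ} (hA : ∀ i j, 0 ≤ A i j) (x : V → ℝ) :
    x ⬝ᵥ A *ᵥ x ≤ |x| ⬝ᵥ A *ᵥ |x| := by
  simp only [dotProduct, mulVec, mul_sum, Pi.abs_apply]
  refine sum_le_sum fun i _ => sum_le_sum fun j _ => ?_
  calc x i * (A i j * x j) ≤ |x i * (A i j * x j)| := le_abs_self _
    _ = |x i| * (A i j * |x j|) := by rw [abs_mul, abs_mul, abs_of_nonneg (hA i j)]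

variable [DecidableEq V]

lemma toEuclideanLin_eq_smul_of_mulVec_eq_smul {A : Matrix V V ℝ} {x : EuclideanSpace ℝ V}
    {r : ℝ} (h : A *ᵥ x = r • x) : toEuclideanLin A x = r • x :=
  WithLp.ofLp_injective 2 h

lemma inner_toEuclideanLin_self (A : Matrix V V ℝ) (x : EuclideanSpace ℝ V) :
    ⟪x, toEuclideanLin A x⟫ = x ⬝ᵥ A *ᵥ x := by
  rw [EuclideanSpace.inner_eq_star_dotProduct, dotProduct_comm]
  rfl

lemma inner_toEuclideanLin_diagonal_sub_self (d : V → ℝ) (A : Matrix V V ℝ)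
    (x : EuclideanSpace ℝ V) :
    ⟪x, toEuclideanLin (diagonal d - A) x⟫ =
      ∑ j, d j * ⟪EuclideanSpace.basisFun V ℝ j, x⟫ ^ 2 - ⟪x, toEuclideanLin A x⟫ := by
  rw [inner_toEuclideanLin_self, inner_toEuclideanLin_self, sub_mulVec, dotProduct_sub]
  congr 1
  simp only [dotProduct, mulVec_diagonal, EuclideanSpace.basisFun_inner]
  exact sum_congr rfl fun j _ => by ring

lemma sum_abs_eigenvalues_diagonal_sub_sub_eq {ω : V → ℝ} {A : Matrix V V ℝ}
    (hL : (diagonal ω - A).IsHermitian) (hA : A.IsHermitian) (c : ℝ) :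
    ∑ k, |hL.eigenvalues k - c| =
      ∑ k, (SignType.sign (hL.eigenvalues k - c) : ℝ) *
          ∑ j, (ω j - c) * ⟪EuclideanSpace.basisFun V ℝ j, hL.eigenvectorBasis k⟫ ^ 2 +
        ∑ k, -(SignType.sign (hL.eigenvalues k - c) : ℝ) *
          ∑ l, hA.eigenvalues l * ⟪hA.eigenvectorBasis l, hL.eigenvectorBasis k⟫ ^ 2 := by
  set e := EuclideanSpace.basisFun V ℝ
  set v := hL.eigenvectorBasis
  have hAsym : (toEuclideanLin A).IsSymmetric := isSymmetric_toEuclideanLin_iff.2 hA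
  have hw := fun l => toEuclideanLin_eq_smul_of_mulVec_eq_smul (hA.mulVec_eigenvectorBasis l)
  rw [← sum_add_distrib]
  refine sum_congr rfl fun k _ => ?_
  have hk : ⟪v k, toEuclideanLin (diagonal ω - A) (v k)⟫ = hL.eigenvalues k := by
    rw [toEuclideanLin_eq_smul_of_mulVec_eq_smul (hL.mulVec_eigenvectorBasis k),
      real_inner_smul_right, real_inner_self_eq_norm_sq, v.norm_eq_one, one_pow, mul_one]
  rw [inner_toEuclideanLin_diagonal_sub_self, hAsym.inner_apply_self_eq_sum hw] at hk
  have hμ : hL.eigenvalues k - c = ∑ j, (ω j - c) * ⟪e j, v k⟫ ^ 2 -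
      ∑ l, hA.eigenvalues l * ⟪hA.eigenvectorBasis l, v k⟫ ^ 2 := by
    simp only [← hk, sub_mul, sum_sub_distrib, ← mul_sum, e.sum_sq_inner_right, v.norm_eq_one,
      one_pow, mul_one]
    ring
  rw [← sign_mul_self, hμ]
  ring

lemma sum_abs_eigenvalues_diagonal_sub_sub_eq_of_forall_eq {ω : V → ℝ} {A : Matrix V V ℝ}
    (hL : (diagonal ω - A).IsHermitian) (hA : A.IsHermitian) {c : ℝ} (hω : ∀ j, ω j = c) :
    ∑ k, |hL.eigenvalues k - c| = ∑ l, |hA.eigenvalues l| := by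
  have hT : (toEuclideanLin (-A)).IsSymmetric := isSymmetric_toEuclideanLin_iff.2 hA.neg
  have hdiag : ∀ x : V → ℝ, diagonal ω *ᵥ x = c • x := fun x => by
    ext j
    simp [mulVec_diagonal, hω]
  have hv : ∀ k, toEuclideanLin (-A) (hL.eigenvectorBasis k) =
      (hL.eigenvalues k - c) • hL.eigenvectorBasis k := fun k => by
    refine toEuclideanLin_eq_smul_of_mulVec_eq_smul ?_
    rw [sub_smul, ← hL.mulVec_eigenvectorBasis, sub_mulVec, hdiag, neg_mulVec]
    abel
  have hw : ∀ l, toEuclideanLin (-A) (hA.eigenvectorBasis l) =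
      (-hA.eigenvalues l) • hA.eigenvectorBasis l := fun l => by
    refine toEuclideanLin_eq_smul_of_mulVec_eq_smul ?_
    rw [neg_smul, ← hA.mulVec_eigenvectorBasis, neg_mulVec]
  simpa only [abs_neg] using
    le_antisymm (hT.sum_abs_le_of_eigenbasis hw hv) (hT.sum_abs_le_of_eigenbasis hv hw)

end Matrix

namespace SimpleGraph

variable {V : Type*} [Fintype V] {G : SimpleGraph V} [DecidableRel G.Adj]

lemma Connected.forall_pos_of_adjMatrix_mulVec_eq_smul (hG : G.Connected) {u : V → ℝ}
    (hu : 0 ≤ u) (hu0 : u ≠ 0) {ρ : ℝ} (h : G.adjMatrix ℝ *ᵥ u = ρ • u) (i : V) : 0 < u i := by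
  have hadj : ∀ a b, G.Adj a b → u a = 0 → u b = 0 := fun a b hab ha => by
    have hsum : ∑ c ∈ G.neighborFinset a, u c = 0 := by
      rw [← adjMatrix_mulVec_apply, h, Pi.smul_apply, ha, smul_zero]
    exact (sum_eq_zero_iff_of_nonneg fun c _ => hu c).1 hsum b ((mem_neighborFinset G a b).2 hab)
  obtain ⟨j, hj⟩ := Function.ne_iff.1 hu0
  refine (hu i).lt_of_ne' fun hi => hj ?_
  obtain ⟨p⟩ := hG i j
  clear hj
  induction p with
  | nil => exact hi
  | cons hab _ ih => exact ih (hadj _ _ hab hi)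

lemma exists_eigenvalues_adjMatrix_pos [DecidableEq V] (hA : (G.adjMatrix ℝ).IsHermitian)
    (hG : G ≠ ⊥) : ∃ i, 0 < hA.eigenvalues i := by
  by_contra! hle
  have hsum : ∑ i, hA.eigenvalues i = 0 := by
    simpa [trace_adjMatrix] using hA.trace_eq_sum_eigenvalues.symm
  have hzero : hA.eigenvalues = 0 :=
    funext fun i => (sum_eq_zero_iff_of_nonpos fun i _ => hle i).1 hsum i (mem_univ i)
  obtain ⟨a, b, hab⟩ := ne_bot_iff_exists_adj.1 hG
  simpa [hab] using congrFun₂ (hA.eigenvalues_eq_zero_iff.1 hzero) a b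

lemma Connected.exists_pos_top_eigenvector [DecidableEq V] (hG : G.Connected)
    (hA : (G.adjMatrix ℝ).IsHermitian) {m : V} (hm : ∀ l, hA.eigenvalues l ≤ hA.eigenvalues m) :
    ∃ u : EuclideanSpace ℝ V, (∀ i, 0 < u i) ∧
      ∀ l, hA.eigenvalues l ≠ hA.eigenvalues m → ⟪hA.eigenvectorBasis l, u⟫ = 0 := by
  have hT : (toEuclideanLin (G.adjMatrix ℝ)).IsSymmetric := isSymmetric_toEuclideanLin_iff.2 hA
  have hw : ∀ l, toEuclideanLin (G.adjMatrix ℝ) (hA.eigenvectorBasis l) =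
      hA.eigenvalues l • hA.eigenvectorBasis l := fun l =>
    toEuclideanLin_eq_smul_of_mulVec_eq_smul (hA.mulVec_eigenvectorBasis l)
  set x := hA.eigenvectorBasis m
  set u : EuclideanSpace ℝ V := WithLp.toLp 2 |WithLp.ofLp x|
  have hnorm : ‖u‖ = 1 := by
    rw [← hA.eigenvectorBasis.norm_eq_one m]
    simp only [u, x, EuclideanSpace.norm_eq, Pi.abs_apply, Real.norm_eq_abs, abs_abs]
  have hray : ⟪u, toEuclideanLin (G.adjMatrix ℝ) u⟫ = hA.eigenvalues m * ‖u‖ ^ 2 := by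
    refine le_antisymm (hT.inner_apply_self_le hw hm u) ?_
    calc hA.eigenvalues m * ‖u‖ ^ 2 = ⟪x, toEuclideanLin (G.adjMatrix ℝ) x⟫ := by
          rw [hw, real_inner_smul_right, real_inner_self_eq_norm_sq, hnorm,
            hA.eigenvectorBasis.norm_eq_one]
      _ ≤ ⟪u, toEuclideanLin (G.adjMatrix ℝ) u⟫ := by
          rw [inner_toEuclideanLin_self, inner_toEuclideanLin_self]
          exact dotProduct_mulVec_le_abs (fun i j => by rw [adjMatrix_apply]; positivity) _
  have horth : ∀ l, hA.eigenvalues l ≠ hA.eigenvalues m → ⟪hA.eigenvectorBasis l, u⟫ = 0 :=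
    fun l => hT.inner_eq_zero_of_inner_apply_self_eq hw hm hray
  have hu0 : WithLp.ofLp u ≠ 0 := fun h => by
    simp [(WithLp.ofLp_eq_zero 2).1 h] at hnorm
  exact ⟨u, hG.forall_pos_of_adjMatrix_mulVec_eq_smul (fun i => abs_nonneg _) hu0
    (congrArg WithLp.ofLp (LinearMap.apply_eq_smul_of_forall_inner_eq_zero hw horth)), horth⟩

lemma Connected.le_of_sum_abs_eigenvalues_sub_eq [DecidableEq V] [Nontrivial V]
    (hG : G.Connected) {ω : V → ℝ} {c : ℝ} (hL : (diagonal ω - G.adjMatrix ℝ).IsHermitian)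
    (hA : (G.adjMatrix ℝ).IsHermitian)
    (h : ∑ k, |hL.eigenvalues k - c| = ∑ j, |ω j - c| + ∑ l, |hA.eigenvalues l|) (j : V) :
    ω j ≤ c := by
  set e := EuclideanSpace.basisFun V ℝ
  set v := hL.eigenvectorBasis
  set w := hA.eigenvectorBasis
  set s : V → ℝ := fun k => SignType.sign (hL.eigenvalues k - c)
  have hs : ∀ k, |s k| ≤ 1 := fun k => abs_sign_le_one _
  have hs' : ∀ k, |-s k| ≤ 1 := fun k => (abs_neg (s k)).trans_le (hs k)
  have hsplit := sum_abs_eigenvalues_diagonal_sub_sub_eq hL hA c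
  have hDle := e.sum_mul_sum_inner_sq_le v hs (fun j => ω j - c)
  have hAle := w.sum_mul_sum_inner_sq_le v hs' hA.eigenvalues
  by_contra! hj
  obtain ⟨m, hm⟩ := Finite.exists_max hA.eigenvalues
  obtain ⟨b, hb⟩ := hG.preconnected.exists_adj_of_nontrivial j
  obtain ⟨i, hi⟩ := exists_eigenvalues_adjMatrix_pos hA (ne_bot_iff_exists_adj.2 ⟨j, b, hb⟩)
  have hρ : 0 < hA.eigenvalues m := hi.trans_le (hm i)
  obtain ⟨u, hu, horth⟩ := hG.exists_pos_top_eigenvector hA hm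
  have hvu : ∀ k, s k = 1 → ⟪v k, u⟫ = 0 := fun k hk =>
    w.inner_eq_zero_of_forall_or fun l => (eq_or_ne (hA.eigenvalues l) (hA.eigenvalues m)).imp
      (fun hl => by
        rw [real_inner_comm]
        exact w.inner_eq_zero_of_sum_abs_le v hs' (by linarith) (hl ▸ hρ) (by norm_num [hk]))
      (horth l)
  have heu : ⟪e j, u⟫ = 0 := v.inner_eq_zero_of_forall_or fun k => (em (s k = 1)).symm.imp
    (fun hk => e.inner_eq_zero_of_sum_abs_le v hs (by linarith) (sub_pos.2 hj) hk) (hvu k)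
  exact (hu j).ne' (by rwa [EuclideanSpace.basisFun_inner] at heu)

end SimpleGraph

theorem weighted_laplacian_energy_eq_iff_regular_general
    (n : ℕ) (G : SimpleGraph (Fin n)) [DecidableRel G.Adj]
    (hconn : G.Connected)
    (ω : Fin n → ℝ)
    (hL : (Matrix.diagonal ω - G.adjMatrix ℝ).IsHermitian)
    (hA : (G.adjMatrix ℝ).IsHermitian) :
    (∑ i, |hL.eigenvalues i - (∑ j, ω j) / n| =
        (n : ℝ) * ((1 / (n : ℝ)) * ∑ i, |ω i - (∑ j, ω j) / n|) +
          ∑ i, |hA.eigenvalues i|) ↔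
      (∀ u v : Fin n, ω u = ω v) := by
  set c := (∑ j, ω j) / n
  have hn : (n : ℝ) ≠ 0 := by exact_mod_cast (Fin.pos_iff_nonempty.2 hconn.nonempty).ne'
  have hsum : ∑ j, ω j = ∑ _j : Fin n, c := by simp [c, mul_div_cancel₀ _ hn]
  rw [one_div, mul_inv_cancel_left₀ hn]
  constructor
  · intro h u v
    rcases eq_or_ne u v with rfl | huv
    · rfl
    have : Nontrivial (Fin n) := nontrivial_of_ne u v huv
    have hle := hconn.le_of_sum_abs_eigenvalues_sub_eq hL hA h
    have heq : ∀ j, ω j = c := fun j =>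
      (sum_eq_sum_iff_of_le fun i _ => hle i).1 hsum j (mem_univ j)
    rw [heq u, heq v]
  · intro h
    have heq : ∀ j, ω j = c := fun j => by
      simp [c, sum_congr rfl fun i _ => h i j, mul_div_cancel_left₀ _ hn]
    have hMD : ∑ i, |ω i - c| = 0 := sum_eq_zero fun i _ => by rw [heq i, sub_self, abs_zero]
    rw [hMD, zero_add]
    exact sum_abs_eigenvalues_diagonal_sub_sub_eq_of_forall_eq hL hA heq

/-- For a connected graph `G` on `n` vertices with vertex weight `ω`,
equality `LE_ω(G) = n · MD_ω(G) + E(G)` holds if and only if `G` is `ω`-regular. -/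
theorem weighted_laplacian_energy_eq_iff_regular
    (n : ℕ) (hn : 0 < n) (G : SimpleGraph (Fin n)) [DecidableRel G.Adj]
    (hconn : G.Connected)
    (ω : Fin n → ℝ) (hω : ∀ i, 0 < ω i)
    (hL : (Matrix.diagonal ω - G.adjMatrix ℝ).IsHermitian)
    (hA : (G.adjMatrix ℝ).IsHermitian) :
    (∑ i, |hL.eigenvalues i - (∑ j, ω j) / n| =
        (n : ℝ) * ((1 / (n : ℝ)) * ∑ i, |ω i - (∑ j, ω j) / n|) +
          ∑ i, |hA.eigenvalues i|) ↔
      (∀ u v : Fin n, ω u = ω v) :=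
  weighted_laplacian_energy_eq_iff_regular_general n G hconn ω hL hA
end

section
/- Let G be a bipartite simple graph on n vertices with a vertex weight ω. Then LE_ω(G) ≥ E(G), i.e., the weighted Laplacian energy of G is at least the (adjacency) energy of G. -/
/-!
Let `S` be the diagonal `±1` matrix of a 2-colouring of `G`. Conjugation by `S` fixes diagonal
matrices and negates the adjacency matrix `A`, so with `N = L_ω - ω̄ I` we get `2A = SNS - N`.
Both energies are trace norms, `E(G) = ‖A‖₁` and `LE_ω(G) = ‖N‖₁`, and the trace norm is
unitarily invariant and subadditive, whence `2 E(G) ≤ 2 LE_ω(G)`. Subadditivity comes from the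
duality `tr(N X) ≤ ‖N‖₁` for every `X` of numerical radius at most one, tested at `X = sign(A)`.
-/

open Matrix

namespace Matrix

lemma star_eq_transpose_of_trivial {m α : Type*} [Star α] [TrivialStar α] (U : Matrix m m α) :
    star U = Uᵀ := by
  rw [star_eq_conjTranspose, conjTranspose_eq_transpose_of_trivial]

variable {ι : Type*} [Fintype ι]

def NumericalRadiusLeOne (X : Matrix ι ι ℝ) : Prop :=
  ∀ v : ι → ℝ, |v ⬝ᵥ X *ᵥ v| ≤ v ⬝ᵥ v

namespace NumericalRadiusLeOne

variable {X : Matrix ι ι ℝ}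

lemma neg (hX : X.NumericalRadiusLeOne) : (-X).NumericalRadiusLeOne := fun v => by
  simpa [neg_mulVec] using hX v

lemma conj [DecidableEq ι] (hX : X.NumericalRadiusLeOne) {U : Matrix ι ι ℝ}
    (hU : U ∈ unitaryGroup ι ℝ) : (U * X * star U).NumericalRadiusLeOne := fun v => by
  have hdot (Y : Matrix ι ι ℝ) :
      v ⬝ᵥ (U * Y * star U) *ᵥ v = (star U *ᵥ v) ⬝ᵥ Y *ᵥ (star U *ᵥ v) := by
    rw [← mulVec_mulVec, ← mulVec_mulVec, dotProduct_mulVec, star_eq_transpose_of_trivial,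
      mulVec_transpose]
  have hnorm := hdot 1
  rw [Matrix.mul_one, mem_unitaryGroup_iff.mp hU, one_mulVec, one_mulVec] at hnorm
  rw [hdot, hnorm]
  exact hX _

lemma abs_apply_self_le [DecidableEq ι] (hX : X.NumericalRadiusLeOne) (i : ι) : |X i i| ≤ 1 := by
  simpa using hX (Pi.single i 1)

end NumericalRadiusLeOne

variable [DecidableEq ι]

lemma numericalRadiusLeOne_diagonal {d : ι → ℝ} (hd : ∀ i, |d i| ≤ 1) :
    (diagonal d).NumericalRadiusLeOne := fun v => by
  simp only [mulVec_diagonal, dotProduct]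
  calc |∑ i, v i * (d i * v i)| ≤ ∑ i, |v i * (d i * v i)| := Finset.abs_sum_le_sum_abs _ _
    _ ≤ ∑ i, v i * v i := Finset.sum_le_sum fun i _ => by
      rw [mul_left_comm, abs_mul, abs_mul_self]
      exact mul_le_of_le_one_left (mul_self_nonneg _) (hd i)

lemma trace_conj_diagonal_mul_le {U X : Matrix ι ι ℝ} (hU : U ∈ unitaryGroup ι ℝ)
    (hX : X.NumericalRadiusLeOne) (d : ι → ℝ) :
    (U * diagonal d * star U * X).trace ≤ ∑ i, |d i| := by
  have hY : (star U * X * U).NumericalRadiusLeOne := by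
    simpa using hX.conj (Unitary.star_mem hU)
  calc (U * diagonal d * star U * X).trace = (diagonal d * (star U * X * U)).trace := by
        rw [Matrix.mul_assoc, Matrix.mul_assoc, trace_mul_comm, Matrix.mul_assoc, Matrix.mul_assoc]
    _ = ∑ i, d i * (star U * X * U) i i := by simp [trace, diagonal_mul]
    _ ≤ ∑ i, |d i| := Finset.sum_le_sum fun i _ => (le_abs_self _).trans <| by
        rw [abs_mul]
        exact mul_le_of_le_one_right (abs_nonneg _) (hY.abs_apply_self_le i)

namespace IsHermitian

section

variable {A : Matrix ι ι ℝ} (hA : A.IsHermitian)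

lemma cfc_eq_conj_diagonal (f : ℝ → ℝ) :
    hA.cfc f = hA.eigenvectorUnitary * diagonal (f ∘ hA.eigenvalues) *
      star (hA.eigenvectorUnitary : Matrix ι ι ℝ) := by
  simp [IsHermitian.cfc, RCLike.ofReal_real_eq_id]

lemma sub_smul_one_eq_cfc (c : ℝ) : A - c • 1 = hA.cfc (· - c) := by
  rw [← hA.cfc_eq, cfc_sub .., cfc_id' .., cfc_const .., Algebra.algebraMap_eq_smul_one]

lemma mul_cfc (f : ℝ → ℝ) : A * hA.cfc f = hA.cfc (fun x => x * f x) := by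
  rw [← hA.cfc_eq, ← hA.cfc_eq,
    cfc_mul _ _ _ (continuousOn_id' _) (A.finite_real_spectrum.continuousOn f), cfc_id' ..]

lemma trace_cfc (f : ℝ → ℝ) : (hA.cfc f).trace = ∑ i, f (hA.eigenvalues i) := by
  rw [cfc_eq_conj_diagonal, trace_mul_cycle, Unitary.coe_star_mul_self, Matrix.one_mul]
  simp [trace]

lemma numericalRadiusLeOne_cfc {f : ℝ → ℝ} (hf : ∀ x, |f x| ≤ 1) :
    (hA.cfc f).NumericalRadiusLeOne := by
  rw [cfc_eq_conj_diagonal]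
  exact (numericalRadiusLeOne_diagonal fun _ => hf _).conj hA.eigenvectorUnitary.2

lemma trace_sub_smul_one_mul_le {X : Matrix ι ι ℝ} (hX : X.NumericalRadiusLeOne) (c : ℝ) :
    ((A - c • 1) * X).trace ≤ ∑ i, |hA.eigenvalues i - c| := by
  rw [sub_smul_one_eq_cfc, cfc_eq_conj_diagonal]
  exact trace_conj_diagonal_mul_le hA.eigenvectorUnitary.2 hX _

lemma trace_mul_cfc_sign :
    (A * hA.cfc (fun x => SignType.sign x)).trace = ∑ i, |hA.eigenvalues i| := by
  simp_rw [mul_cfc, self_mul_sign, trace_cfc]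

end

lemma sum_abs_eigenvalues_le_of_conj_sub {B M S : Matrix ι ι ℝ} (hB : B.IsHermitian)
    (hM : M.IsHermitian) (hS : S ∈ unitaryGroup ι ℝ) (h : S * M * star S - M = 2 • B) (c : ℝ) :
    ∑ i, |hB.eigenvalues i| ≤ ∑ i, |hM.eigenvalues i - c| := by
  have hN : S * (M - c • 1) * star S - (M - c • 1) = 2 • B := by
    rw [← h, Matrix.mul_sub, Matrix.sub_mul, Matrix.mul_smul, Matrix.smul_mul, Matrix.mul_one,
      mem_unitaryGroup_iff.mp hS]
    abel
  set N := M - c • 1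
  set X := hB.cfc (fun x => SignType.sign x)
  have hX : X.NumericalRadiusLeOne :=
    hB.numericalRadiusLeOne_cfc fun x => by cases SignType.sign x <;> simp
  have hSXS : (star S * X * S).NumericalRadiusLeOne := by
    simpa using hX.conj (Unitary.star_mem hS)
  have key : 2 * ∑ i, |hB.eigenvalues i| = (N * (star S * X * S)).trace + (N * -X).trace :=
    calc 2 * ∑ i, |hB.eigenvalues i| = (2 • B * X).trace := by
          rw [Matrix.smul_mul, trace_smul, hB.trace_mul_cfc_sign, nsmul_eq_mul, Nat.cast_ofNat]
      _ = (S * (N * star S * X)).trace - (N * X).trace := by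
          rw [← hN, Matrix.sub_mul, trace_sub]
          simp only [Matrix.mul_assoc]
      _ = (N * (star S * X * S)).trace + (N * -X).trace := by
          rw [trace_mul_comm, Matrix.mul_neg, trace_neg]
          simp only [Matrix.mul_assoc, sub_eq_add_neg]
  linarith [hM.trace_sub_smul_one_mul_le hSXS c, hM.trace_sub_smul_one_mul_le hX.neg c]

end IsHermitian

end Matrix

namespace SimpleGraph

variable {V : Type*} [DecidableEq V] {G : SimpleGraph V}

def Coloring.signature (C : G.Coloring (Fin 2)) : Matrix V V ℝ :=
  diagonal fun v => (-1) ^ (C v : ℕ)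

namespace Coloring

variable (C : G.Coloring (Fin 2))

lemma star_signature : star C.signature = C.signature := by
  simp [signature, star_eq_transpose_of_trivial]

variable [Fintype V]

lemma signature_mul_self : C.signature * C.signature = 1 := by
  simp [signature, ← pow_add, ← two_mul, pow_mul]

lemma signature_mem_unitaryGroup : C.signature ∈ unitaryGroup V ℝ := by
  rw [mem_unitaryGroup_iff, star_signature, signature_mul_self]

lemma signature_mul_diagonal_mul_signature (d : V → ℝ) :
    C.signature * diagonal d * C.signature = diagonal d := by
  rw [signature, diagonal_mul_diagonal, diagonal_mul_diagonal]
  congr 1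
  ext v
  rw [mul_right_comm, ← pow_add, ← two_mul, pow_mul]
  simp

lemma signature_mul_adjMatrix_mul_signature [DecidableRel G.Adj] :
    C.signature * G.adjMatrix ℝ * C.signature = -G.adjMatrix ℝ := by
  ext i j
  by_cases hij : G.Adj i j
  · have hC : C i ≠ C j := C.valid hij
    simp only [signature, diagonal_mul, mul_diagonal, adjMatrix_apply, if_pos hij]
    generalize C i = a, C j = b at hC
    fin_cases a <;> fin_cases b <;> simp_all
  · simp only [signature, diagonal_mul, mul_diagonal, adjMatrix_apply, if_neg hij]
    simp [hij]

lemma signature_conj_sub_self [DecidableRel G.Adj] (d : V → ℝ) :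
    C.signature * (diagonal d - G.adjMatrix ℝ) * star C.signature - (diagonal d - G.adjMatrix ℝ) =
      2 • G.adjMatrix ℝ := by
  rw [star_signature, Matrix.mul_sub, Matrix.sub_mul, signature_mul_diagonal_mul_signature,
    signature_mul_adjMatrix_mul_signature]
  abel

end Coloring

end SimpleGraph

theorem weighted_laplacian_energy_ge_energy_of_bipartite_general
    (n : ℕ) (G : SimpleGraph (Fin n)) [DecidableRel G.Adj]
    (hbip : G.Colorable 2)
    (ω : Fin n → ℝ)
    (hL : (Matrix.diagonal ω - G.adjMatrix ℝ).IsHermitian)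
    (hA : (G.adjMatrix ℝ).IsHermitian) :
    ∑ i, |hA.eigenvalues i| ≤ ∑ i, |hL.eigenvalues i - (∑ j, ω j) / n| := by
  obtain ⟨C⟩ := hbip
  exact hA.sum_abs_eigenvalues_le_of_conj_sub hL C.signature_mem_unitaryGroup
    (C.signature_conj_sub_self ω) _

/-- For a bipartite graph `G` on `n` vertices with vertex weight `ω`,
`LE_ω(G) ≥ E(G)`. -/
theorem weighted_laplacian_energy_ge_energy_of_bipartite
    (n : ℕ) (hn : 0 < n) (G : SimpleGraph (Fin n)) [DecidableRel G.Adj]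
    (hbip : G.Colorable 2)
    (ω : Fin n → ℝ) (hω : ∀ i, 0 < ω i)
    (hL : (Matrix.diagonal ω - G.adjMatrix ℝ).IsHermitian)
    (hA : (G.adjMatrix ℝ).IsHermitian) :
    ∑ i, |hA.eigenvalues i| ≤ ∑ i, |hL.eigenvalues i - (∑ j, ω j) / n| :=
  weighted_laplacian_energy_ge_energy_of_bipartite_general n G hbip ω hL hA
end

section
/- Let G be a bipartite simple graph on n vertices with a vertex weight ω. Then LE_ω(G) ≥ n·MD_ω(G), i.e., the weighted Laplacian energy is at least n times the mean deviation of the weights. -/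
open scoped BigOperators

lemma diag_abs_sum_le_eigen_abs_sum {n : ℕ} {M : Matrix (Fin n) (Fin n) ℝ}
    (hM : M.IsHermitian) (c : ℝ) :
    ∑ i, |M i i - c| ≤ ∑ i, |hM.eigenvalues i - c| := by
  set U : Matrix (Fin n) (Fin n) ℝ := (hM.eigenvectorUnitary : Matrix (Fin n) (Fin n) ℝ) with hU
  have hUU : U * star U = 1 := (Matrix.mem_unitaryGroup_iff).mp hM.eigenvectorUnitary.2
  have hUU' : star U * U = 1 := (Matrix.mem_unitaryGroup_iff').mp hM.eigenvectorUnitary.2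
  have hrow : ∀ i, ∑ k, U i k ^ 2 = 1 := by
    intro i
    have := congr_fun (congr_fun hUU i) i
    simpa [Matrix.mul_apply, Matrix.one_apply, sq] using this
  have hcol : ∀ k, ∑ i, U i k ^ 2 = 1 := by
    intro k
    have := congr_fun (congr_fun hUU' k) k
    simpa [Matrix.mul_apply, Matrix.one_apply, sq] using this
  have hMii : ∀ i, M i i = ∑ k, hM.eigenvalues k * U i k ^ 2 := by
    intro i
    conv_lhs => rw [hM.spectral_theorem]
    simp [Matrix.mul_apply, Matrix.diagonal_apply, Finset.sum_mul, sq, ← hU]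
    apply Finset.sum_congr rfl
    intro k _
    ring
  have key : ∀ i, |M i i - c| ≤ ∑ k, |hM.eigenvalues k - c| * U i k ^ 2 := by
    intro i
    have h1 : M i i - c = ∑ k, (hM.eigenvalues k - c) * U i k ^ 2 := by
      rw [hMii i]
      have := hrow i
      rw [Finset.sum_congr rfl (fun k _ => sub_mul (hM.eigenvalues k) c (U i k ^ 2)),
        Finset.sum_sub_distrib, ← Finset.mul_sum, this, mul_one]
    rw [h1]
    refine (Finset.abs_sum_le_sum_abs _ _).trans ?_
    apply le_of_eq
    apply Finset.sum_congr rfl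
    intro k _
    rw [abs_mul, abs_sq]
  calc ∑ i, |M i i - c| ≤ ∑ i, ∑ k, |hM.eigenvalues k - c| * U i k ^ 2 :=
        Finset.sum_le_sum fun i _ => key i
    _ = ∑ k, |hM.eigenvalues k - c| * ∑ i, U i k ^ 2 := by
        rw [Finset.sum_comm]
        exact Finset.sum_congr rfl fun k _ => by rw [Finset.mul_sum]
    _ = ∑ k, |hM.eigenvalues k - c| := by
        exact Finset.sum_congr rfl fun k _ => by rw [hcol k, mul_one]

/-- For a bipartite graph `G` on `n` vertices with vertex weight `ω`,
`LE_ω(G) ≥ n · MD_ω(G)`. -/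
theorem weighted_laplacian_energy_ge_mean_deviation_of_bipartite
    (n : ℕ) (hn : 0 < n) (G : SimpleGraph (Fin n)) [DecidableRel G.Adj]
    (hbip : G.Colorable 2)
    (ω : Fin n → ℝ) (hω : ∀ i, 0 < ω i)
    (hL : (Matrix.diagonal ω - G.adjMatrix ℝ).IsHermitian) :
    (n : ℝ) * ((1 / (n : ℝ)) * ∑ i, |ω i - (∑ j, ω j) / n|) ≤
      ∑ i, |hL.eigenvalues i - (∑ j, ω j) / n| := by
  have hn' : (n : ℝ) ≠ 0 := Nat.cast_ne_zero.mpr hn.ne'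
  have hdiag : ∀ i, (Matrix.diagonal ω - G.adjMatrix ℝ) i i = ω i := by
    intro i
    simp [Matrix.sub_apply, Matrix.diagonal_apply]
  have := diag_abs_sum_le_eigen_abs_sum hL ((∑ j, ω j) / n)
  have hcancel : (n : ℝ) * ((1 / (n : ℝ)) * ∑ i, |ω i - (∑ j, ω j) / n|) =
      ∑ i, |ω i - (∑ j, ω j) / n| := by field_simp
  rw [hcancel]
  calc ∑ i, |ω i - (∑ j, ω j) / n|
      = ∑ i, |(Matrix.diagonal ω - G.adjMatrix ℝ) i i - (∑ j, ω j) / n| := by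
        exact Finset.sum_congr rfl fun i _ => by rw [hdiag i]
    _ ≤ _ := this
end

section
/- Let G be a connected bipartite simple graph on n vertices with a vertex weight ω. Then max{ n·MD_ω(G), E(G) } ≤ LE_ω(G) ≤ n·MD_ω(G) + E(G). -/
open Matrix
open scoped BigOperators

variable {n : ℕ}

/-- contraction-type property -/
def Ctr (X : Matrix (Fin n) (Fin n) ℝ) : Prop :=
  ∀ v : Fin n → ℝ, |v ⬝ᵥ X *ᵥ v| ≤ v ⬝ᵥ v

lemma shift_decomp (M : Matrix (Fin n) (Fin n) ℝ) (hM : M.IsHermitian) (c : ℝ) :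
    M - c • 1 = (hM.eigenvectorUnitary : Matrix (Fin n) (Fin n) ℝ) *
      diagonal (fun i => hM.eigenvalues i - c) *
      star (hM.eigenvectorUnitary : Matrix (Fin n) (Fin n) ℝ) := by
  set U := (hM.eigenvectorUnitary : Matrix (Fin n) (Fin n) ℝ)
  have h1 : U * star U = 1 := (Matrix.mem_unitaryGroup_iff).mp hM.eigenvectorUnitary.2
  have h2 : M = U * diagonal hM.eigenvalues * star U := hM.spectral_theorem
  have h3 : diagonal (fun i => hM.eigenvalues i - c) = diagonal hM.eigenvalues - c • 1 := by
    rw [← Matrix.diagonal_one, ← Matrix.diagonal_smul, ← Matrix.diagonal_sub]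
    congr 1; ext i j; by_cases h : i = j <;> simp [Matrix.diagonal, Matrix.one_apply, h]
  rw [h3, Matrix.mul_sub, Matrix.sub_mul, ← h2]
  congr 1
  rw [Matrix.mul_smul, Matrix.smul_mul, mul_one, h1]

lemma trace_mul_shift_le (M : Matrix (Fin n) (Fin n) ℝ) (hM : M.IsHermitian) (c : ℝ)
    (X : Matrix (Fin n) (Fin n) ℝ) (hX : Ctr X) :
    (X * (M - c • 1)).trace ≤ ∑ i, |hM.eigenvalues i - c| := by
  set U := (hM.eigenvectorUnitary : Matrix (Fin n) (Fin n) ℝ) with hU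
  have hUU : star U * U = 1 := (Matrix.mem_unitaryGroup_iff').mp hM.eigenvectorUnitary.2
  rw [shift_decomp M hM c, ← hU]
  set d : Fin n → ℝ := fun i => hM.eigenvalues i - c
  have h1 : X * (U * diagonal d * star U) = (X * U) * diagonal d * star U := by
    simp [Matrix.mul_assoc]
  rw [h1, Matrix.trace_mul_cycle]
  have h2 : (star U * (X * U) * diagonal d).trace = ∑ i, (star U * (X * U)) i i * d i := by
    simp [Matrix.trace, Matrix.diag, Matrix.mul_diagonal]
  rw [h2]
  refine Finset.sum_le_sum fun i _ => ?_
  have hNi : (star U * (X * U)) i i = (fun j => U j i) ⬝ᵥ X *ᵥ (fun j => U j i) := by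
    simp [Matrix.mul_apply, Matrix.star_apply, Matrix.mulVec, dotProduct, Finset.mul_sum]
  have huu : (fun j => U j i) ⬝ᵥ (fun j => U j i) = 1 := by
    have : (star U * U) i i = (fun j => U j i) ⬝ᵥ (fun j => U j i) := by
      simp [Matrix.mul_apply, Matrix.star_apply, dotProduct]
    rw [← this, hUU, Matrix.one_apply_eq]
  have hb : |(star U * (X * U)) i i| ≤ 1 := by
    rw [hNi, ← huu]; exact hX _
  calc (star U * (X * U)) i i * d i ≤ |(star U * (X * U)) i i * d i| := le_abs_self _
    _ = |(star U * (X * U)) i i| * |d i| := abs_mul _ _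
    _ ≤ 1 * |d i| := by gcongr
    _ = |d i| := one_mul _

lemma vecMul_eq_star_mulVec (U : Matrix (Fin n) (Fin n) ℝ) (v : Fin n → ℝ) :
    v ᵥ* U = star U *ᵥ v := by
  ext j; simp [Matrix.vecMul, Matrix.mulVec, dotProduct, Matrix.star_apply, mul_comm]

lemma exists_dual (M : Matrix (Fin n) (Fin n) ℝ) (hM : M.IsHermitian) (c : ℝ) :
    ∃ X : Matrix (Fin n) (Fin n) ℝ, Ctr X ∧
      (X * (M - c • 1)).trace = ∑ i, |hM.eigenvalues i - c| := by
  set U := (hM.eigenvectorUnitary : Matrix (Fin n) (Fin n) ℝ) with hU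
  have hUU : star U * U = 1 := (Matrix.mem_unitaryGroup_iff').mp hM.eigenvectorUnitary.2
  have hUU' : U * star U = 1 := (Matrix.mem_unitaryGroup_iff).mp hM.eigenvectorUnitary.2
  set d : Fin n → ℝ := fun i => hM.eigenvalues i - c with hd
  set s : Fin n → ℝ := fun i => if d i < 0 then -1 else 1 with hs
  refine ⟨U * diagonal s * star U, ?_, ?_⟩
  · intro v
    have hvv : (star U *ᵥ v) ⬝ᵥ (star U *ᵥ v) = v ⬝ᵥ v := by
      nth_rewrite 1 [← vecMul_eq_star_mulVec]
      rw [Matrix.dotProduct_mulVec, Matrix.vecMul_vecMul, hUU', Matrix.vecMul_one]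
    have key : v ⬝ᵥ (U * diagonal s * star U) *ᵥ v
        = ∑ i, ((star U *ᵥ v) i * s i) * (star U *ᵥ v) i := by
      rw [Matrix.dotProduct_mulVec, ← Matrix.vecMul_vecMul, ← Matrix.vecMul_vecMul,
        vecMul_eq_star_mulVec U v, ← Matrix.dotProduct_mulVec, dotProduct]
      exact Finset.sum_congr rfl fun i _ => by rw [Matrix.vecMul_diagonal]
    rw [key, ← hvv]
    calc |∑ i, ((star U *ᵥ v) i * s i) * (star U *ᵥ v) i|
        ≤ ∑ i, |((star U *ᵥ v) i * s i) * (star U *ᵥ v) i| := Finset.abs_sum_le_sum_abs _ _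
      _ ≤ ∑ i, (star U *ᵥ v) i * (star U *ᵥ v) i := by
          refine Finset.sum_le_sum fun i _ => ?_
          rw [abs_mul, abs_mul]
          have hs1 : |s i| ≤ 1 := by by_cases h : d i < 0 <;> simp [hs, h]
          calc |(star U *ᵥ v) i| * |s i| * |(star U *ᵥ v) i|
              ≤ |(star U *ᵥ v) i| * 1 * |(star U *ᵥ v) i| := by gcongr
            _ = |(star U *ᵥ v) i| * |(star U *ᵥ v) i| := by ring
            _ = (star U *ᵥ v) i * (star U *ᵥ v) i := abs_mul_abs_self _
      _ = (star U *ᵥ v) ⬝ᵥ (star U *ᵥ v) := rfl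
  · have h1 : U * diagonal s * star U * (M - c • 1)
        = U * diagonal (fun i => s i * d i) * star U := by
      rw [shift_decomp M hM c, ← hU, ← hd]
      calc U * diagonal s * star U * (U * diagonal d * star U)
          = U * diagonal s * (star U * U) * diagonal d * star U := by
            simp [Matrix.mul_assoc]
        _ = U * (diagonal s * diagonal d) * star U := by rw [hUU]; simp [Matrix.mul_assoc]
        _ = U * diagonal (fun i => s i * d i) * star U := by rw [Matrix.diagonal_mul_diagonal]
    rw [h1, Matrix.trace_mul_cycle, hUU, Matrix.one_mul, Matrix.trace_diagonal]
    refine Finset.sum_congr rfl fun i _ => ?_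
    by_cases h : d i < 0
    · simp only [hs]
      rw [if_pos h, abs_of_neg h]; ring
    · simp only [hs]
      rw [if_neg h, abs_of_nonneg (not_lt.mp h)]; ring

lemma ctr_neg {X : Matrix (Fin n) (Fin n) ℝ} (hX : Ctr X) : Ctr (-X) := by
  intro v
  rw [Matrix.neg_mulVec, dotProduct_neg, abs_neg]
  exact hX v

lemma ctr_diagonal (s : Fin n → ℝ) (hs : ∀ i, |s i| ≤ 1) : Ctr (diagonal s) := by
  intro v
  have h : v ⬝ᵥ diagonal s *ᵥ v = ∑ i, v i * (s i * v i) := by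
    simp [dotProduct, Matrix.mulVec_diagonal]
  rw [h]
  calc |∑ i, v i * (s i * v i)| ≤ ∑ i, |v i * (s i * v i)| := Finset.abs_sum_le_sum_abs _ _
    _ ≤ ∑ i, v i * v i := by
        refine Finset.sum_le_sum fun i _ => ?_
        rw [abs_mul, abs_mul]
        calc |v i| * (|s i| * |v i|) ≤ |v i| * (1 * |v i|) := by gcongr; exact hs i
          _ = |v i| * |v i| := by ring
          _ = v i * v i := abs_mul_abs_self _
    _ = v ⬝ᵥ v := rfl

lemma ctr_conj_diag (ε : Fin n → ℝ) (hε : ∀ i, ε i * ε i = 1)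
    {X : Matrix (Fin n) (Fin n) ℝ} (hX : Ctr X) : Ctr (diagonal ε * X * diagonal ε) := by
  intro v
  have h1 : (diagonal ε * X * diagonal ε) *ᵥ v = diagonal ε *ᵥ (X *ᵥ (diagonal ε *ᵥ v)) := by
    simp [Matrix.mulVec_mulVec, Matrix.mul_assoc]
  have h2 : v ᵥ* diagonal ε = diagonal ε *ᵥ v := by
    ext i; rw [Matrix.vecMul_diagonal, Matrix.mulVec_diagonal, mul_comm]
  have h3 : v ⬝ᵥ (diagonal ε * X * diagonal ε) *ᵥ v
      = (diagonal ε *ᵥ v) ⬝ᵥ X *ᵥ (diagonal ε *ᵥ v) := by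
    rw [h1, Matrix.dotProduct_mulVec, h2]
  have h4 : (diagonal ε *ᵥ v) ⬝ᵥ (diagonal ε *ᵥ v) = v ⬝ᵥ v := by
    simp only [dotProduct, Matrix.mulVec_diagonal]
    refine Finset.sum_congr rfl fun i _ => ?_
    calc ε i * v i * (ε i * v i) = (ε i * ε i) * (v i * v i) := by ring
      _ = v i * v i := by rw [hε i, one_mul]
  rw [h3, ← h4]
  exact hX _

lemma trace_mul_diag_le {X : Matrix (Fin n) (Fin n) ℝ} (hX : Ctr X) (e : Fin n → ℝ) :
    (X * diagonal e).trace ≤ ∑ i, |e i| := by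
  have hd : ∀ i, |X i i| ≤ 1 := by
    intro i
    have := hX (Pi.single i 1)
    have h1 : (Pi.single i 1 : Fin n → ℝ) ⬝ᵥ X *ᵥ Pi.single i 1 = X i i := by
      simp [dotProduct, Matrix.mulVec, Pi.single_apply, Finset.sum_ite_eq, mul_comm]
    have h2 : (Pi.single i 1 : Fin n → ℝ) ⬝ᵥ Pi.single i 1 = 1 := by
      simp [dotProduct, Pi.single_apply]
    rwa [h1, h2] at this
  have h : (X * diagonal e).trace = ∑ i, X i i * e i := by
    simp [Matrix.trace, Matrix.diag, Matrix.mul_diagonal]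
  rw [h]
  refine Finset.sum_le_sum fun i _ => ?_
  calc X i i * e i ≤ |X i i * e i| := le_abs_self _
    _ = |X i i| * |e i| := abs_mul _ _
    _ ≤ 1 * |e i| := by gcongr; exact hd i
    _ = |e i| := one_mul _

lemma diagonal_sub_smul_one (ω : Fin n → ℝ) (c : ℝ) :
    diagonal (fun i => ω i - c) = diagonal ω - c • (1 : Matrix (Fin n) (Fin n) ℝ) := by
  rw [← Matrix.diagonal_one, ← Matrix.diagonal_smul, ← Matrix.diagonal_sub]
  congr 1; ext i j; by_cases h : i = j <;> simp [Matrix.diagonal, Matrix.one_apply, h]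

/-- For a connected bipartite graph `G` on `n` vertices with vertex weight `ω`,
`max {n · MD_ω(G), E(G)} ≤ LE_ω(G) ≤ n · MD_ω(G) + E(G)`. -/
theorem weighted_laplacian_energy_bounds_of_bipartite
    (n : ℕ) (hn : 0 < n) (G : SimpleGraph (Fin n)) [DecidableRel G.Adj]
    (hconn : G.Connected) (hbip : G.Colorable 2)
    (ω : Fin n → ℝ) (hω : ∀ i, 0 < ω i)
    (hL : (Matrix.diagonal ω - G.adjMatrix ℝ).IsHermitian)
    (hA : (G.adjMatrix ℝ).IsHermitian) :
    max ((n : ℝ) * ((1 / (n : ℝ)) * ∑ i, |ω i - (∑ j, ω j) / n|))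
        (∑ i, |hA.eigenvalues i|) ≤
      ∑ i, |hL.eigenvalues i - (∑ j, ω j) / n| ∧
    ∑ i, |hL.eigenvalues i - (∑ j, ω j) / n| ≤
      (n : ℝ) * ((1 / (n : ℝ)) * ∑ i, |ω i - (∑ j, ω j) / n|) +
        ∑ i, |hA.eigenvalues i| := by
  classical
  have hn0 : (n : ℝ) ≠ 0 := Nat.cast_ne_zero.mpr hn.ne'
  set A : Matrix (Fin n) (Fin n) ℝ := G.adjMatrix ℝ with hAdef
  set c : ℝ := (∑ j, ω j) / n with hc
  set dg : Fin n → ℝ := fun i => ω i - c with hdg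
  have hmd : (n : ℝ) * ((1 / (n : ℝ)) * ∑ i, |ω i - c|) = ∑ i, |dg i| := by
    rw [← mul_assoc, mul_one_div, div_self hn0, one_mul]
  have hshift : Matrix.diagonal ω - A - c • 1 = diagonal dg - A := by
    rw [sub_right_comm, hdg, diagonal_sub_smul_one]
  have hAe : ∀ i, |hA.eigenvalues i - 0| = |hA.eigenvalues i| := fun i => by rw [sub_zero]
  -- Part 1 : n·MD ≤ LE
  have part1 : ∑ i, |dg i| ≤ ∑ i, |hL.eigenvalues i - c| := by
    set S : Matrix (Fin n) (Fin n) ℝ := diagonal (fun i => if dg i < 0 then -1 else 1) with hS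
    have hCS : Ctr S := ctr_diagonal _ (fun i => by by_cases h : dg i < 0 <;> simp [h])
    have htr : (S * (Matrix.diagonal ω - A - c • 1)).trace = ∑ i, |dg i| := by
      rw [hshift, Matrix.mul_sub, Matrix.trace_sub]
      have t1 : (S * diagonal dg).trace = ∑ i, |dg i| := by
        rw [hS, Matrix.diagonal_mul_diagonal, Matrix.trace_diagonal]
        refine Finset.sum_congr rfl fun i _ => ?_
        by_cases h : dg i < 0
        · rw [if_pos h, abs_of_neg h]; ring
        · rw [if_neg h, abs_of_nonneg (not_lt.mp h)]; ring
      have t2 : (S * A).trace = 0 := by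
        have h0 : ∀ i, (S * A) i i = 0 := by
          intro i
          rw [hS, Matrix.diagonal_mul, hAdef, SimpleGraph.adjMatrix_apply,
            if_neg (G.irrefl), mul_zero]
        simp [Matrix.trace, Matrix.diag, h0]
      rw [t1, t2, sub_zero]
    have := trace_mul_shift_le _ hL c S hCS
    rwa [htr] at this
  -- Part 2 : E ≤ LE  (uses bipartiteness)
  have part2 : ∑ i, |hA.eigenvalues i| ≤ ∑ i, |hL.eigenvalues i - c| := by
    obtain ⟨Cc⟩ := hbip
    set ε : Fin n → ℝ := fun i => if Cc i = 0 then 1 else -1 with hε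
    have hε2 : ∀ i, ε i * ε i = 1 := fun i => by by_cases h : Cc i = 0 <;> simp [hε, h]
    have fin2 : ∀ a b : Fin 2, a ≠ 0 → b ≠ 0 → a = b := by decide
    set T : Matrix (Fin n) (Fin n) ℝ := diagonal ε with hT
    have hTAT : T * A * T = -A := by
      ext i j
      rw [hT, Matrix.mul_diagonal, Matrix.diagonal_mul, Matrix.neg_apply]
      by_cases hadj : G.Adj i j
      · have hne : Cc i ≠ Cc j := Cc.valid hadj
        have hsgn : ε i * ε j = -1 := by
          by_cases h0 : Cc i = 0 <;> by_cases h1 : Cc j = 0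
          · exact absurd (h0.trans h1.symm) hne
          · simp [hε, h0, h1]
          · simp [hε, h0, h1]
          · exact absurd (fin2 _ _ h0 h1) hne
        rw [hAdef, SimpleGraph.adjMatrix_apply, if_pos hadj]
        calc ε i * 1 * ε j = ε i * ε j := by ring
          _ = -1 := hsgn
      · rw [hAdef, SimpleGraph.adjMatrix_apply, if_neg hadj]; ring
    have hTDT : ∀ e : Fin n → ℝ, T * diagonal e * T = diagonal e := by
      intro e
      rw [hT, Matrix.diagonal_mul_diagonal, Matrix.diagonal_mul_diagonal]
      have hfe : (fun i => ε i * e i * ε i) = e := by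
        funext i
        rw [mul_comm (ε i) (e i), mul_assoc, hε2 i, mul_one]
      rw [hfe]
    obtain ⟨X₀, hX₀, hX₀tr⟩ := exists_dual A hA 0
    have hz : A - (0 : ℝ) • 1 = A := by rw [zero_smul, sub_zero]
    rw [hz] at hX₀tr
    have hX₀A : (X₀ * A).trace = ∑ i, |hA.eigenvalues i| := by
      rw [hX₀tr]
      exact Finset.sum_congr rfl fun i _ => hAe i
    have hTZT : T * (Matrix.diagonal ω - A - c • 1) * T = diagonal dg + A := by
      rw [hshift, Matrix.mul_sub, Matrix.sub_mul, hTDT, hTAT, sub_neg_eq_add]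
    have h2A : T * (Matrix.diagonal ω - A - c • 1) * T - (Matrix.diagonal ω - A - c • 1)
        = 2 • A := by
      rw [hTZT, hshift, two_smul]
      abel
    have e1 : (T * X₀ * T * (Matrix.diagonal ω - A - c • 1)).trace
        = (X₀ * (T * (Matrix.diagonal ω - A - c • 1) * T)).trace := by
      have h := Matrix.trace_mul_comm T (X₀ * (T * (Matrix.diagonal ω - A - c • 1)))
      simp only [← Matrix.mul_assoc] at h ⊢
      rw [h]
    have e2 : (X₀ * (T * (Matrix.diagonal ω - A - c • 1) * T)).trace
          + ((-X₀) * (Matrix.diagonal ω - A - c • 1)).trace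
        = 2 * (X₀ * A).trace := by
      rw [Matrix.neg_mul, Matrix.trace_neg, ← sub_eq_add_neg, ← Matrix.trace_sub,
        ← Matrix.mul_sub, h2A, mul_smul_comm]
      simp only [nsmul_eq_mul, Nat.cast_ofNat]
      rw [two_mul, Matrix.trace_add]
      ring
    have b1 : (T * X₀ * T * (Matrix.diagonal ω - A - c • 1)).trace
        ≤ ∑ i, |hL.eigenvalues i - c| :=
      trace_mul_shift_le _ hL c _ (by rw [hT]; exact ctr_conj_diag ε hε2 hX₀)
    have b2 : ((-X₀) * (Matrix.diagonal ω - A - c • 1)).trace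
        ≤ ∑ i, |hL.eigenvalues i - c| :=
      trace_mul_shift_le _ hL c _ (ctr_neg hX₀)
    rw [← hX₀A]
    linarith [b1, b2, e1, e2]
  -- Part 3 : upper bound
  have part3 : ∑ i, |hL.eigenvalues i - c| ≤ ∑ i, |dg i| + ∑ i, |hA.eigenvalues i| := by
    obtain ⟨X₁, hX₁, hX₁tr⟩ := exists_dual _ hL c
    have hsplit : (X₁ * (Matrix.diagonal ω - A - c • 1)).trace
        = (X₁ * diagonal dg).trace + ((-X₁) * A).trace := by
      rw [hshift, Matrix.mul_sub, Matrix.trace_sub, Matrix.neg_mul, Matrix.trace_neg]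
      ring
    have bd1 : (X₁ * diagonal dg).trace ≤ ∑ i, |dg i| := trace_mul_diag_le hX₁ dg
    have bd2 : ((-X₁) * A).trace ≤ ∑ i, |hA.eigenvalues i| := by
      have hz : A - (0 : ℝ) • 1 = A := by rw [zero_smul, sub_zero]
      have h := trace_mul_shift_le _ hA 0 _ (ctr_neg hX₁)
      rw [hz] at h
      calc ((-X₁) * A).trace ≤ ∑ i, |hA.eigenvalues i - 0| := h
        _ = ∑ i, |hA.eigenvalues i| := Finset.sum_congr rfl fun i _ => hAe i
    rw [← hX₁tr, hsplit]
    exact add_le_add bd1 bd2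
  refine ⟨max_le ?_ part2, ?_⟩
  · rw [hmd]; exact part1
  · rw [hmd]; exact part3
end

section
/- Let k be a positive integer, and for each 1 ≤ i ≤ k let G_i be a simple graph on n_i vertices with vertex weight ω_i. Let G = G_1 ∪ … ∪ G_k be their disjoint union with the inherited vertex weight ω (ω(v) = ω_i(v) for v a vertex of G_i). Then LE_ω(G) ≤ Σ_{i=1}^k LE_{ω_i}(G_i) + Σ_{i=1}^k |ω̄_i − ω̄|·n_i, where ω̄_i is the average weight of G_i and ω̄ is the average weight of G. -/
/-!
The Laplacian of the disjoint union is the block-diagonal matrix of the Laplacians of the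
components, so its characteristic polynomial is the product of theirs and its spectrum is the
union of their spectra. Summing `|μ - ω̄|` block by block, the triangle inequality
`|μ - ω̄| ≤ |μ - ω̄ᵢ| + |ω̄ᵢ - ω̄|` gives the bound.
-/

open Polynomial

namespace Matrix

variable {ι R : Type*} [Fintype ι] [DecidableEq ι] {n : ι → Type*}
  [∀ i, Fintype (n i)] [∀ i, DecidableEq (n i)]

theorem det_blockDiagonal' [CommRing R] (A : ∀ i, Matrix (n i) (n i) R) :
    (blockDiagonal' A).det = ∏ i, (A i).det := by
  -- a block-diagonal matrix is block triangular for every linear order on the blocks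
  let _ : LinearOrder ι := LinearOrder.lift' _ (Fintype.equivFin ι).injective
  rw [(blockTriangular_blockDiagonal' A).det_fintype]
  refine Finset.prod_congr rfl fun i _ => ?_
  let e : n i ≃ {a : Σ j, n j // a.1 = i} :=
    { toFun := fun v => ⟨⟨i, v⟩, rfl⟩
      invFun := fun a => a.2 ▸ a.1.2
      left_inv := fun v => rfl
      right_inv := by rintro ⟨⟨j, v⟩, rfl⟩; rfl }
  rw [← det_submatrix_equiv_self e]
  congr 1
  ext v w
  simp [toSquareBlock_def, e]

theorem charmatrix_blockDiagonal' [CommRing R] (A : ∀ i, Matrix (n i) (n i) R) :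
    charmatrix (blockDiagonal' A) = blockDiagonal' fun i => charmatrix (A i) := by
  ext ⟨i, v⟩ ⟨j, w⟩ : 1
  obtain rfl | hij := eq_or_ne i j
  · simp [charmatrix_apply, diagonal_apply]
  · simp [blockDiagonal'_apply_ne _ _ _ hij, hij]

theorem charpoly_blockDiagonal' [CommRing R] (A : ∀ i, Matrix (n i) (n i) R) :
    (blockDiagonal' A).charpoly = ∏ i, (A i).charpoly := by
  rw [charpoly, charmatrix_blockDiagonal', det_blockDiagonal']
  rfl

variable {𝕜 : Type*} [RCLike 𝕜]

theorem IsHermitian.eigenvalues_blockDiagonal' {A : ∀ i, Matrix (n i) (n i) 𝕜}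
    (hA : ∀ i, (A i).IsHermitian) (h : (blockDiagonal' A).IsHermitian) :
    Finset.univ.val.map h.eigenvalues =
      Finset.univ.val.bind fun i => Finset.univ.val.map (hA i).eigenvalues := by
  refine Multiset.map_injective (RCLike.ofReal_injective (K := 𝕜)) ?_
  rw [Multiset.map_map, ← h.roots_charpoly_eq_eigenvalues, charpoly_blockDiagonal',
    roots_prod _ _ (Finset.prod_ne_zero_iff.2 fun i _ => (charpoly_monic _).ne_zero),
    Multiset.map_bind]
  simp_rw [(hA _).roots_charpoly_eq_eigenvalues, Multiset.map_map]

theorem IsHermitian.sum_comp_eigenvalues_blockDiagonal' {M : Type*} [AddCommMonoid M] (f : ℝ → M)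
    {A : ∀ i, Matrix (n i) (n i) 𝕜} (hA : ∀ i, (A i).IsHermitian)
    (h : (blockDiagonal' A).IsHermitian) :
    ∑ a, f (h.eigenvalues a) = ∑ i, ∑ v, f ((hA i).eigenvalues v) := by
  rw [Finset.sum_eq_multiset_sum, ← Function.comp_def f, ← Multiset.map_map,
    h.eigenvalues_blockDiagonal' hA, Multiset.map_bind, Multiset.sum_bind]
  simp [Multiset.map_map]

end Matrix

theorem SimpleGraph.adjMatrix_eq_blockDiagonal' {ι R : Type*} [DecidableEq ι] [Zero R] [One R]
    {V : ι → Type*} (H : ∀ i, SimpleGraph (V i)) [∀ i, DecidableRel (H i).Adj]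
    (G : SimpleGraph (Σ i, V i)) [DecidableRel G.Adj]
    (hG : ∀ a b : Σ i, V i, G.Adj a b ↔ ∃ h : b.1 = a.1, (H a.1).Adj a.2 (h ▸ b.2)) :
    G.adjMatrix R = Matrix.blockDiagonal' fun i => (H i).adjMatrix R := by
  ext ⟨i, v⟩ ⟨j, w⟩ : 1
  obtain rfl | hij := eq_or_ne i j
  · simp [hG]
  · simp [hG, Matrix.blockDiagonal'_apply_ne _ _ _ hij, Ne.symm hij]

theorem Finset.sum_abs_sub_le_sum_abs_sub_add {ι : Type*} (s : Finset ι) (f : ι → ℝ) (c d : ℝ) :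
    ∑ x ∈ s, |f x - c| ≤ ∑ x ∈ s, |f x - d| + |d - c| * s.card :=
  calc ∑ x ∈ s, |f x - c|
      ≤ ∑ x ∈ s, (|f x - d| + |d - c|) := Finset.sum_le_sum fun x _ => abs_sub_le _ _ _
    _ = ∑ x ∈ s, |f x - d| + |d - c| * s.card := by
      rw [Finset.sum_add_distrib, Finset.sum_const, nsmul_eq_mul, mul_comm]

theorem weighted_laplacian_energy_disjoint_union_le_general
    (k : ℕ) (nv : Fin k → ℕ)
    (Gf : ∀ i, SimpleGraph (Fin (nv i))) [∀ i, DecidableRel fun a b => (Gf i).Adj a b]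
    (ωf : ∀ i, Fin (nv i) → ℝ)
    (G : SimpleGraph (Σ i, Fin (nv i))) [DecidableRel G.Adj]
    (hG : ∀ a b : Σ i, Fin (nv i),
      G.Adj a b ↔ ∃ h : b.1 = a.1, (Gf a.1).Adj a.2 (h ▸ b.2))
    (ω : (Σ i, Fin (nv i)) → ℝ) (hωdef : ∀ i v, ω ⟨i, v⟩ = ωf i v)
    (hL : (Matrix.diagonal ω - G.adjMatrix ℝ).IsHermitian)
    (hLf : ∀ i, (Matrix.diagonal (ωf i) - (Gf i).adjMatrix ℝ).IsHermitian) :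
    ∑ a, |hL.eigenvalues a - (∑ b, ω b) / (∑ i, (nv i : ℝ))| ≤
      (∑ i, ∑ v, |(hLf i).eigenvalues v - (∑ w, ωf i w) / (nv i)|) +
        ∑ i, |(∑ w, ωf i w) / (nv i) - (∑ b, ω b) / (∑ j, (nv j : ℝ))| * (nv i) := by
  have hdiag : Matrix.diagonal ω = Matrix.blockDiagonal' fun i => Matrix.diagonal (ωf i) := by
    rw [Matrix.blockDiagonal'_diagonal]
    exact congrArg Matrix.diagonal (funext fun a => hωdef a.1 a.2)
  have hblock : Matrix.diagonal ω - G.adjMatrix ℝ =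
      Matrix.blockDiagonal' fun i => Matrix.diagonal (ωf i) - (Gf i).adjMatrix ℝ := by
    rw [hdiag, G.adjMatrix_eq_blockDiagonal' Gf hG, ← Matrix.blockDiagonal'_sub]
    rfl
  revert hL
  rw [hblock]
  intro hL
  rw [hL.sum_comp_eigenvalues_blockDiagonal' (fun x => |x - _|) hLf, ← Finset.sum_add_distrib]
  refine Finset.sum_le_sum fun i _ => ?_
  simpa only [Finset.card_univ, Fintype.card_fin] using
    Finset.sum_abs_sub_le_sum_abs_sub_add Finset.univ (hLf i).eigenvalues _ ((∑ w, ωf i w) / nv i)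

/-- Upper bound on the weighted Laplacian energy of a disjoint union of graphs:
`LE_ω(⋃ᵢ Gᵢ) ≤ ∑ᵢ LE_{ωᵢ}(Gᵢ) + ∑ᵢ |ω̄ᵢ - ω̄|·nᵢ`.
The disjoint union `G` is a graph on `Σ i, Fin (nv i)` whose adjacency relation
restricts on each block to that of `Gᵢ`, with no edges between blocks, and whose
weight `ω` restricts to `ωᵢ` on the vertices of `Gᵢ`. -/
theorem weighted_laplacian_energy_disjoint_union_le
    (k : ℕ) (hk : 0 < k) (nv : Fin k → ℕ) (hnv : ∀ i, 0 < nv i)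
    (Gf : ∀ i, SimpleGraph (Fin (nv i))) [∀ i, DecidableRel fun a b => (Gf i).Adj a b]
    (ωf : ∀ i, Fin (nv i) → ℝ) (hωf : ∀ i v, 0 < ωf i v)
    (G : SimpleGraph (Σ i, Fin (nv i))) [DecidableRel G.Adj]
    (hG : ∀ a b : Σ i, Fin (nv i),
      G.Adj a b ↔ ∃ h : b.1 = a.1, (Gf a.1).Adj a.2 (h ▸ b.2))
    (ω : (Σ i, Fin (nv i)) → ℝ) (hωdef : ∀ i v, ω ⟨i, v⟩ = ωf i v)
    (hL : (Matrix.diagonal ω - G.adjMatrix ℝ).IsHermitian)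
    (hLf : ∀ i, (Matrix.diagonal (ωf i) - (Gf i).adjMatrix ℝ).IsHermitian) :
    ∑ a, |hL.eigenvalues a - (∑ b, ω b) / (∑ i, (nv i : ℝ))| ≤
      (∑ i, ∑ v, |(hLf i).eigenvalues v - (∑ w, ωf i w) / (nv i)|) +
        ∑ i, |(∑ w, ωf i w) / (nv i) - (∑ b, ω b) / (∑ j, (nv j : ℝ))| * (nv i) :=
  weighted_laplacian_energy_disjoint_union_le_general k nv Gf ωf G hG ω hωdef hL hLf
end
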